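/- arXiv:1607.04757 — 4 statements merged into one kernel-verified Lean document; each statement's English description precedes it below -/
import Mathlib

section
/- (Polyak's lemma) Let {v_k}, {u_k}, {b_k}, {c_k} be nonnegative real sequences with Σ b_k < ∞ and Σ c_k < ∞, satisfying v_{k+1} ≤ (1 + b_k)v_k − u_k + c_k for all k ≥ 0. Then {v_k} converges and Σ u_k < ∞. -/
open Filter

/-- (Polyak's lemma) If nonnegative sequences `v, u, b, c` satisfy `Σ b_k < ∞`,
`Σ c_k < ∞`, and `v_{k+1} ≤ (1 + b_k) v_k - u_k + c_k` for all `k ≥ 0`,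
then `v` converges and `Σ u_k < ∞`. -/
theorem polyak_lemma (v u b c : ℕ → ℝ)
    (hv : ∀ k, 0 ≤ v k) (hu : ∀ k, 0 ≤ u k) (hb : ∀ k, 0 ≤ b k) (hc : ∀ k, 0 ≤ c k)
    (hbsum : Summable b) (hcsum : Summable c)
    (hrec : ∀ k, v (k + 1) ≤ (1 + b k) * v k - u k + c k) :
    (∃ L : ℝ, Tendsto v atTop (nhds L)) ∧ Summable u := by
  set P : ℕ → ℝ := fun k => ∏ j ∈ Finset.range k, (1 + b j) with hPdef
  have hP1 : ∀ k, 1 ≤ P k := by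
    intro k
    simp only [hPdef]
    induction k with
    | zero => simp
    | succ m ih =>
      rw [Finset.prod_range_succ]
      nlinarith [hb m]
  have hPpos : ∀ k, 0 < P k := fun k => lt_of_lt_of_le one_pos (hP1 k)
  have hPsucc : ∀ k, P (k + 1) = P k * (1 + b k) := fun k => Finset.prod_range_succ _ k
  set M : ℝ := Real.exp (∑' j, b j) with hMdef
  have hPle : ∀ k, P k ≤ M := by
    intro k
    calc P k ≤ ∏ j ∈ Finset.range k, Real.exp (b j) := by
          apply Finset.prod_le_prod
          · intro j _; linarith [hb j]
          · intro j _; linarith [Real.add_one_le_exp (b j)]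
      _ = Real.exp (∑ j ∈ Finset.range k, b j) := (Real.exp_sum _ _).symm
      _ ≤ M := Real.exp_le_exp.mpr (Summable.sum_le_tsum _ (fun j _ => hb j) hbsum)
  set vt : ℕ → ℝ := fun k => v k / P k with hvtdef
  set ut : ℕ → ℝ := fun k => u k / P (k + 1) with hutdef
  set ct : ℕ → ℝ := fun k => c k / P (k + 1) with hctdef
  have hvtnn : ∀ k, 0 ≤ vt k := fun k => div_nonneg (hv k) (hPpos k).le
  have hutnn : ∀ k, 0 ≤ ut k := fun k => div_nonneg (hu k) (hPpos (k + 1)).le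
  have hctnn : ∀ k, 0 ≤ ct k := fun k => div_nonneg (hc k) (hPpos (k + 1)).le
  have key : ∀ k, vt (k + 1) ≤ vt k - ut k + ct k := by
    intro k
    show v (k + 1) / P (k + 1) ≤ v k / P k - u k / P (k + 1) + c k / P (k + 1)
    have hpos := hPpos (k + 1)
    have hpk := hPpos k
    have h1 : v (k + 1) / P (k + 1) ≤ ((1 + b k) * v k - u k + c k) / P (k + 1) := by
      gcongr
      exact hrec k
    have h2 : ((1 + b k) * v k - u k + c k) / P (k + 1)
        = v k / P k - u k / P (k + 1) + c k / P (k + 1) := by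
      have hbne : (1 : ℝ) + b k ≠ 0 := ne_of_gt (by linarith [hb k])
      rw [hPsucc k, add_div, sub_div, mul_comm (1 + b k) (v k),
        mul_div_mul_right (v k) (P k) hbne]
    linarith
  have hctsum : Summable ct := by
    apply Summable.of_nonneg_of_le hctnn _ hcsum
    intro k
    calc ct k = c k / P (k + 1) := rfl
      _ ≤ c k / 1 := by
          apply div_le_div_of_nonneg_left (hc k) one_pos (hP1 (k + 1))
      _ = c k := div_one _
  -- partial sums bound
  have hut_partial : ∀ n, ∑ k ∈ Finset.range n, ut k ≤ vt 0 + ∑' k, ct k := by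
    intro n
    have tele : ∑ k ∈ Finset.range n, ut k ≤ vt 0 - vt n + ∑ k ∈ Finset.range n, ct k := by
      induction n with
      | zero => simp
      | succ m ih =>
        rw [Finset.sum_range_succ, Finset.sum_range_succ]
        have := key m
        linarith
    have hle : ∑ k ∈ Finset.range n, ct k ≤ ∑' k, ct k :=
      Summable.sum_le_tsum _ (fun k _ => hctnn k) hctsum
    linarith [hvtnn n]
  have husum : Summable u := by
    apply summable_of_sum_range_le (c := M * (vt 0 + ∑' k, ct k)) hu
    intro n
    have h1 : ∀ k, u k ≤ M * ut k := by
      intro k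
      have : u k = ut k * P (k + 1) := by
        show u k = u k / P (k + 1) * P (k + 1)
        rw [div_mul_cancel₀ _ (hPpos (k + 1)).ne']
      rw [this]
      calc ut k * P (k + 1) ≤ ut k * M := by
            exact mul_le_mul_of_nonneg_left (hPle (k + 1)) (hutnn k)
        _ = M * ut k := mul_comm _ _
    calc ∑ k ∈ Finset.range n, u k ≤ ∑ k ∈ Finset.range n, M * ut k :=
          Finset.sum_le_sum (fun k _ => h1 k)
      _ = M * ∑ k ∈ Finset.range n, ut k := by rw [Finset.mul_sum]
      _ ≤ M * (vt 0 + ∑' k, ct k) := by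
          apply mul_le_mul_of_nonneg_left (hut_partial n)
          exact (Real.exp_pos _).le
  -- convergence of v
  set S : ℕ → ℝ := fun k => ∑ j ∈ Finset.range k, ct j with hSdef
  set w : ℕ → ℝ := fun k => vt k - S k with hwdef
  have hwanti : Antitone w := by
    apply antitone_nat_of_succ_le
    intro k
    have := key k
    simp only [hwdef, hSdef, Finset.sum_range_succ]
    linarith [hutnn k]
  have hwbdd : BddBelow (Set.range w) := by
    refine ⟨-(∑' k, ct k), ?_⟩
    rintro x ⟨k, rfl⟩
    have hS : S k ≤ ∑' k, ct k := Summable.sum_le_tsum _ (fun j _ => hctnn j) hctsum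
    simp only [hwdef]
    linarith [hvtnn k]
  have hwconv : Tendsto w atTop (nhds (⨅ k, w k)) := tendsto_atTop_ciInf hwanti hwbdd
  have hSconv : Tendsto S atTop (nhds (∑' k, ct k)) := hctsum.hasSum.tendsto_sum_nat
  have hvtconv : Tendsto vt atTop (nhds ((⨅ k, w k) + ∑' k, ct k)) := by
    have : vt = fun k => w k + S k := by
      funext k; simp [hwdef]
    rw [this]
    exact hwconv.add hSconv
  have hPmono : Monotone P := by
    apply monotone_nat_of_le_succ
    intro k
    rw [hPsucc k]
    nlinarith [hPpos k, hb k]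
  have hPbdd : BddAbove (Set.range P) := ⟨M, by rintro x ⟨k, rfl⟩; exact hPle k⟩
  have hPconv : Tendsto P atTop (nhds (⨆ k, P k)) := tendsto_atTop_ciSup hPmono hPbdd
  refine ⟨⟨((⨅ k, w k) + ∑' k, ct k) * (⨆ k, P k), ?_⟩, husum⟩
  have : v = fun k => vt k * P k := by
    funext k
    show v k = v k / P k * P k
    rw [div_mul_cancel₀ _ (hPpos k).ne']
  rw [this]
  exact hvtconv.mul hPconv
end

section
/- Let f: ℝᵖ → ℝ be differentiable, s-strongly convex, with l-Lipschitz gradient, and let z* be its (unique) minimizer. For 0 < α < 2/l, the gradient step z₊ = z − α∇f(z) satisfies ‖z₊ − z*‖ ≤ η‖z − z*‖ with η = max(|1 − αl|, |1 − αs|) < 1. -/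
set_option maxHeartbeats 2000000
open RealInnerProductSpace



/-- First-order condition for a function with monotone gradient. -/
lemma foc_aux {p : ℕ} (F : EuclideanSpace ℝ (Fin p) → ℝ) (G : EuclideanSpace ℝ (Fin p) → EuclideanSpace ℝ (Fin p))
    (hG : ∀ x, HasGradientAt F (G x) x)
    (hmono : ∀ x y, (0:ℝ) ≤ ⟪G x - G y, x - y⟫)
    (x y : EuclideanSpace ℝ (Fin p)) :
    F x + ⟪G x, y - x⟫ ≤ F y := by
  set v := y - x with hv
  have hline : ∀ t : ℝ, HasDerivAt (fun t : ℝ => x + t • v) v t := fun t => by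
    simpa using ((hasDerivAt_id t).smul_const v).const_add x
  have hphi : ∀ t : ℝ, HasDerivAt (fun t : ℝ => F (x + t • v)) ⟪G (x + t • v), v⟫ t := by
    intro t
    have h1 : HasFDerivAt F (InnerProductSpace.toDual ℝ _ (G (x + t • v))) (x + t • v) :=
      (hG (x + t • v))
    exact h1.comp_hasDerivAt t (hline t)
  set ψ : ℝ → ℝ := fun t => F (x + t • v) - t * ⟪G x, v⟫ with hψdef
  have hψ : ∀ t : ℝ, HasDerivAt ψ (⟪G (x + t • v), v⟫ - ⟪G x, v⟫) t := by
    intro t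
    exact (hphi t).sub (hasDerivAt_mul_const (⟪G x, v⟫))
  have hmonoOn : MonotoneOn ψ (Set.Ici (0:ℝ)) := by
    apply monotoneOn_of_hasDerivWithinAt_nonneg (convex_Ici 0)
      (fun t _ => (hψ t).continuousAt.continuousWithinAt)
      (fun t _ => (hψ t).hasDerivWithinAt)
    intro t ht
    rw [interior_Ici] at ht
    have ht0 : (0:ℝ) < t := ht
    have := hmono (x + t • v) x
    have hsub : (x + t • v) - x = t • v := by abel
    rw [hsub, real_inner_smul_right, inner_sub_left] at this
    nlinarith
  have h01 := hmonoOn (Set.self_mem_Ici) (by norm_num : (1:ℝ) ∈ Set.Ici (0:ℝ)) zero_le_one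
  simp only [hψdef, zero_smul, add_zero, one_smul, zero_mul, sub_zero, one_mul] at h01
  have : x + v = y := by rw [hv]; abel
  rw [this] at h01
  linarith


lemma quad_grad {p : ℕ} (c : ℝ) (x : EuclideanSpace ℝ (Fin p)) :
    HasGradientAt (fun y : EuclideanSpace ℝ (Fin p) => c / 2 * ‖y‖ ^ 2) (c • x) x := by
  have h1 : HasFDerivAt (fun y : EuclideanSpace ℝ (Fin p) => (⟪y, y⟫ : ℝ))
      ((fderivInnerCLM ℝ (x, x)).comp ((ContinuousLinearMap.id ℝ _).prod (ContinuousLinearMap.id ℝ _))) x := by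
    simpa using (hasFDerivAt_id x).inner ℝ (hasFDerivAt_id x)
  have h2 := h1.const_mul (c / 2)
  rw [hasGradientAt_iff_hasFDerivAt]
  have hfun : (fun y : EuclideanSpace ℝ (Fin p) => c / 2 * ‖y‖ ^ 2)
      = fun y : EuclideanSpace ℝ (Fin p) => c / 2 * (⟪y, y⟫ : ℝ) := by
    funext y; rw [real_inner_self_eq_norm_sq]
  rw [hfun]
  refine h2.congr_fderiv ?_
  apply ContinuousLinearMap.ext
  intro v
  simp only [InnerProductSpace.toDual_apply_apply, ContinuousLinearMap.coe_smul', Pi.smul_apply,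
    ContinuousLinearMap.coe_comp', Function.comp_apply, ContinuousLinearMap.prod_apply,
    ContinuousLinearMap.coe_id', id_eq, fderivInnerCLM_apply, smul_eq_mul,
    real_inner_smul_left]
  rw [real_inner_comm v x]
  ring

lemma grad_sub_quad {p : ℕ} (f : EuclideanSpace ℝ (Fin p) → ℝ)
    (g' : EuclideanSpace ℝ (Fin p)) (c : ℝ) (x : EuclideanSpace ℝ (Fin p))
    (hf : HasGradientAt f g' x) :
    HasGradientAt (fun y => f y - c / 2 * ‖y‖ ^ 2) (g' - c • x) x := by
  have h := quad_grad c x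
  rw [hasGradientAt_iff_hasFDerivAt] at *
  rw [map_sub]
  exact hf.sub h

lemma quad_sub_grad {p : ℕ} (f : EuclideanSpace ℝ (Fin p) → ℝ)
    (g' : EuclideanSpace ℝ (Fin p)) (c : ℝ) (x : EuclideanSpace ℝ (Fin p))
    (hf : HasGradientAt f g' x) :
    HasGradientAt (fun y => c / 2 * ‖y‖ ^ 2 - f y) (c • x - g') x := by
  have h := quad_grad c x
  rw [hasGradientAt_iff_hasFDerivAt] at *
  rw [map_sub]
  exact h.sub hf

lemma descent_aux {p : ℕ} (F : EuclideanSpace ℝ (Fin p) → ℝ)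
    (G : EuclideanSpace ℝ (Fin p) → EuclideanSpace ℝ (Fin p))
    (hG : ∀ x, HasGradientAt F (G x) x) (L : ℝ)
    (hlipform : ∀ x y, (⟪G x - G y, x - y⟫ : ℝ) ≤ L * ‖x - y‖ ^ 2)
    (x y : EuclideanSpace ℝ (Fin p)) :
    F y ≤ F x + ⟪G x, y - x⟫ + L / 2 * ‖y - x‖ ^ 2 := by
  have hψ : ∀ u, HasGradientAt (fun w => L / 2 * ‖w‖ ^ 2 - F w) (L • u - G u) u :=
    fun u => quad_sub_grad F (G u) L u (hG u)
  have hψmono : ∀ a b, (0:ℝ) ≤ ⟪(L • a - G a) - (L • b - G b), a - b⟫ := by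
    intro a b
    have hexp : (L • a - G a) - (L • b - G b) = L • (a - b) - (G a - G b) := by module
    rw [hexp, inner_sub_left, real_inner_smul_left, real_inner_self_eq_norm_sq]
    have := hlipform a b
    linarith
  have h := foc_aux _ _ hψ hψmono x y
  rw [inner_sub_left, real_inner_smul_left] at h
  have hn : ‖y - x‖ ^ 2 = ‖y‖ ^ 2 - 2 * ⟪y, x⟫ + ‖x‖ ^ 2 := by
    rw [@norm_sub_sq_real]
  rw [inner_sub_right, real_inner_self_eq_norm_sq] at h
  rw [real_inner_comm x y] at hn
  rw [hn]
  nlinarith [h]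

lemma coco_aux {p : ℕ} (F : EuclideanSpace ℝ (Fin p) → ℝ)
    (G : EuclideanSpace ℝ (Fin p) → EuclideanSpace ℝ (Fin p))
    (hG : ∀ x, HasGradientAt F (G x) x) (L : ℝ) (hL : 0 < L)
    (hmono : ∀ x y, (0:ℝ) ≤ ⟪G x - G y, x - y⟫)
    (hlipform : ∀ x y, (⟪G x - G y, x - y⟫ : ℝ) ≤ L * ‖x - y‖ ^ 2)
    (x y : EuclideanSpace ℝ (Fin p)) :
    ‖G x - G y‖ ^ 2 ≤ L * ⟪G x - G y, x - y⟫ := by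
  have oneside : ∀ a b : EuclideanSpace ℝ (Fin p),
      F a + ⟪G a, b - a⟫ + 1 / (2 * L) * ‖G b - G a‖ ^ 2 ≤ F b := by
    intro a b
    set u := G b - G a with hu
    set w := b - L⁻¹ • u with hw
    have k1 : F a + ⟪G a, w - a⟫ ≤ F w := foc_aux F G hG hmono a w
    have k2 : F w ≤ F b + ⟪G b, w - b⟫ + L / 2 * ‖w - b‖ ^ 2 := descent_aux F G hG L hlipform b w
    have hwb : w - b = -(L⁻¹ • u) := by rw [hw]; module
    have hwa : w - a = (b - a) - L⁻¹ • u := by rw [hw]; module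
    rw [hwb] at k2
    rw [hwa] at k1
    rw [inner_neg_right, real_inner_smul_right] at k2
    rw [norm_neg, norm_smul, Real.norm_eq_abs, abs_inv, abs_of_pos hL, mul_pow] at k2
    rw [inner_sub_right, real_inner_smul_right] at k1
    have hinner : ⟪G b, u⟫ - ⟪G a, u⟫ = ‖u‖ ^ 2 := by
      rw [← inner_sub_left, ← hu, real_inner_self_eq_norm_sq]
    have hcoef : L / 2 * ((L⁻¹) ^ 2 * ‖u‖ ^ 2) = 1 / (2 * L) * ‖u‖ ^ 2 := by
      field_simp
    have hcoef2 : L⁻¹ * ⟪G b, u⟫ - L⁻¹ * ⟪G a, u⟫ = L⁻¹ * ‖u‖ ^ 2 := by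
      rw [← mul_sub, hinner]
    have hinv : L⁻¹ * ‖u‖ ^ 2 - 1 / (2 * L) * ‖u‖ ^ 2 = 1 / (2 * L) * ‖u‖ ^ 2 := by
      field_simp; ring
    linarith
  have h1 := oneside x y
  have h2 := oneside y x
  have hnrev : ‖G x - G y‖ = ‖G y - G x‖ := norm_sub_rev _ _
  have hir : ⟪G y, x - y⟫ = -⟪G y, y - x⟫ := by
    rw [← inner_neg_right]; congr 1; module
  rw [hnrev]
  have hsum : ⟪G x - G y, x - y⟫ = -(⟪G x, y - x⟫ + ⟪G y, x - y⟫) := by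
    rw [inner_sub_left, hir]
    have : ⟪G x, x - y⟫ = -⟪G x, y - x⟫ := by
      rw [← inner_neg_right]; congr 1; module
    rw [this]; ring
  rw [hsum]
  rw [hnrev] at h2
  have e1 : 1 / (2 * L) * ‖G y - G x‖ ^ 2 + 1 / (2 * L) * ‖G y - G x‖ ^ 2
      = (1 / L) * ‖G y - G x‖ ^ 2 := by
    field_simp
    ring
  have key2 : (1 / L) * ‖G y - G x‖ ^ 2 ≤ -(⟪G x, y - x⟫ + ⟪G y, x - y⟫) := by
    linarith
  have e2 : L * ((1 / L) * ‖G y - G x‖ ^ 2) = ‖G y - G x‖ ^ 2 := by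
    field_simp
  calc ‖G y - G x‖ ^ 2 = L * ((1 / L) * ‖G y - G x‖ ^ 2) := e2.symm
    _ ≤ L * -(⟪G x, y - x⟫ + ⟪G y, x - y⟫) := mul_le_mul_of_nonneg_left key2 hL.le

/-- Let `f : ℝᵖ → ℝ` be differentiable, `s`-strongly convex, with `l`-Lipschitz
gradient `g`, and let `z*` be its minimizer (so `g z* = 0`). For `0 < α < 2/l`,
the gradient step `z₊ = z - α g z` satisfies `‖z₊ - z*‖ ≤ η ‖z - z*‖` with
`η = max (|1 - α l|) (|1 - α s|) < 1`. -/
theorem gradient_descent_contraction {p : ℕ}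
    (f : EuclideanSpace ℝ (Fin p) → ℝ) (g : EuclideanSpace ℝ (Fin p) → EuclideanSpace ℝ (Fin p))
    (hgrad : ∀ x, HasGradientAt f (g x) x)
    (s l : ℝ) (hs : 0 < s) (hsl : s ≤ l)
    (hstrong : ∀ x y, s * ‖x - y‖ ^ 2 ≤ inner ℝ (g x - g y) (x - y))
    (hlip : ∀ x y, ‖g x - g y‖ ≤ l * ‖x - y‖)
    (zstar : EuclideanSpace ℝ (Fin p)) (hmin : ∀ z, f zstar ≤ f z) (hzstar : g zstar = 0)
    (α : ℝ) (hα0 : 0 < α) (hα : α < 2 / l) (z : EuclideanSpace ℝ (Fin p))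
    (η : ℝ) (hη : η = max |1 - α * l| |1 - α * s|) :
    ‖(z - α • g z) - zstar‖ ≤ η * ‖z - zstar‖ ∧ η < 1 := by
  have hl : 0 < l := hs.trans_le hsl
  have hαl : α * l < 2 := by
    rw [lt_div_iff₀ hl] at hα; linarith
  obtain ⟨γ, hγdef⟩ : ∃ w, w = g z := ⟨_, rfl⟩
  obtain ⟨δ, hδdef⟩ : ∃ w, w = z - zstar := ⟨_, rfl⟩
  obtain ⟨I, hIdef⟩ : ∃ r : ℝ, r = ⟪γ, δ⟫ := ⟨_, rfl⟩
  obtain ⟨D, hDdef⟩ : ∃ r : ℝ, r = ‖δ‖ ^ 2 := ⟨_, rfl⟩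
  obtain ⟨Gq, hGdef⟩ : ∃ r : ℝ, r = ‖γ‖ ^ 2 := ⟨_, rfl⟩
  have hD0 : 0 ≤ D := hDdef ▸ sq_nonneg _
  have hG0 : 0 ≤ Gq := hGdef ▸ sq_nonneg _
  have hI : s * D ≤ I := by
    rw [hIdef, hDdef, hγdef, hδdef]
    have := hstrong z zstar
    rwa [hzstar, sub_zero] at this
  have hγl : ‖γ‖ ≤ l * ‖δ‖ := by
    rw [hγdef, hδdef]
    have := hlip z zstar
    rwa [hzstar, sub_zero] at this
  have hCS : I ≤ ‖γ‖ * ‖δ‖ := by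
    rw [hIdef]; exact real_inner_le_norm γ δ
  have hGl : Gq ≤ l ^ 2 * D := by
    rw [hGdef, hDdef]
    nlinarith [norm_nonneg γ, norm_nonneg δ, hγl]
  have hγs : s * ‖δ‖ ≤ ‖γ‖ := by
    rcases eq_or_lt_of_le (norm_nonneg δ) with hd | hd
    · rw [← hd, mul_zero]; exact norm_nonneg γ
    · have h2 : s * ‖δ‖ * ‖δ‖ ≤ ‖γ‖ * ‖δ‖ := by nlinarith [hI, hCS, hDdef]
      exact le_of_mul_le_mul_right h2 hd
  have hGs : s ^ 2 * D ≤ Gq := by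
    nlinarith [hγs, hs, norm_nonneg δ, hDdef, hGdef,
      mul_le_mul hγs hγs (mul_nonneg hs.le (norm_nonneg δ)) (norm_nonneg γ)]
  -- key interpolation inequality
  have key : Gq + s * l * D ≤ (s + l) * I := by
    rcases eq_or_lt_of_le hsl with heq | hlt
    · subst heq
      nlinarith [mul_le_mul_of_nonneg_left hI hs.le, hGl, hs]
    · have hL : (0:ℝ) < l - s := by linarith
      have hG' : ∀ x, HasGradientAt (fun y => f y - s / 2 * ‖y‖ ^ 2) (g x - s • x) x :=
        fun x => grad_sub_quad f (g x) s x (hgrad x)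
      have hmono' : ∀ a b : EuclideanSpace ℝ (Fin p),
          (0:ℝ) ≤ ⟪(g a - s • a) - (g b - s • b), a - b⟫ := by
        intro a b
        have hexp : (g a - s • a) - (g b - s • b) = (g a - g b) - s • (a - b) := by module
        rw [hexp, inner_sub_left, real_inner_smul_left, real_inner_self_eq_norm_sq]
        have := hstrong a b
        linarith
      have hlipform' : ∀ a b : EuclideanSpace ℝ (Fin p),
          (⟪(g a - s • a) - (g b - s • b), a - b⟫ : ℝ) ≤ (l - s) * ‖a - b‖ ^ 2 := by
        intro a b
        have hexp : (g a - s • a) - (g b - s • b) = (g a - g b) - s • (a - b) := by module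
        rw [hexp, inner_sub_left, real_inner_smul_left, real_inner_self_eq_norm_sq]
        have h1 : (⟪g a - g b, a - b⟫ : ℝ) ≤ ‖g a - g b‖ * ‖a - b‖ := real_inner_le_norm _ _
        have h2 := hlip a b
        nlinarith [norm_nonneg (a - b)]
      have hc := coco_aux _ (fun x => g x - s • x) hG' (l - s) hL hmono' hlipform' z zstar
      have hu : (g z - s • z) - (g zstar - s • zstar) = γ - s • δ := by
        rw [hzstar, hγdef, hδdef]; module
      rw [hu] at hc
      have hlhs : ‖γ - s • δ‖ ^ 2 = Gq - 2 * (s * I) + s ^ 2 * D := by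
        rw [norm_sub_sq_real, real_inner_smul_right, norm_smul, Real.norm_eq_abs, mul_pow,
          sq_abs, ← hGdef, ← hDdef, ← hIdef]
      have hrhs : (⟪γ - s • δ, z - zstar⟫ : ℝ) = I - s * D := by
        rw [← hδdef, inner_sub_left, real_inner_smul_left, real_inner_self_eq_norm_sq,
          ← hIdef, ← hDdef]
      rw [hlhs, hrhs] at hc
      nlinarith [hc]
  -- expansion of the squared step
  have hw : (z - α • g z) - zstar = δ - α • γ := by rw [hγdef, hδdef]; module
  have hT : ‖δ - α • γ‖ ^ 2 = D - 2 * α * I + α ^ 2 * Gq := by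
    rw [norm_sub_sq_real, real_inner_smul_right, norm_smul, Real.norm_eq_abs, mul_pow,
      sq_abs, ← hDdef, ← hGdef]
    have hcom : (⟪δ, γ⟫ : ℝ) = I := by rw [hIdef]; exact real_inner_comm γ δ
    rw [hcom]; ring
  have hsl0 : (0:ℝ) < s + l := by linarith
  rcases le_or_gt (α * (s + l)) 2 with hc1 | hc2
  · -- small stepsize regime: η = 1 - α s
    have hα_sl : α * s ≤ α * l := mul_le_mul_of_nonneg_left hsl hα0.le
    have hαs1 : α * s ≤ 1 := by linarith
    have habs1 : |1 - α * s| = 1 - α * s := abs_of_nonneg (by linarith)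
    have habs2 : |1 - α * l| ≤ 1 - α * s := by
      rw [abs_le]; constructor <;> linarith
    have hmaxle : |1 - α * l| ≤ |1 - α * s| := by rw [habs1]; exact habs2
    have hηval : η = 1 - α * s := by rw [hη, max_eq_right hmaxle, habs1]
    have hηlt : η < 1 := by rw [hηval]; nlinarith [mul_pos hα0 hs]
    have hηnn : 0 ≤ η := by rw [hηval]; linarith
    refine ⟨?_, hηlt⟩
    have hsq : (s + l) * (D - 2 * α * I + α ^ 2 * Gq) ≤ (s + l) * ((1 - α * s) ^ 2 * D) := by
      nlinarith [mul_nonneg (mul_nonneg hα0.le (by linarith : (0:ℝ) ≤ 2 - α * (s + l)))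
        (by linarith : (0:ℝ) ≤ Gq - s ^ 2 * D),
        mul_le_mul_of_nonneg_left key hα0.le]
    have hsq2 : ‖(z - α • g z) - zstar‖ ^ 2 ≤ η ^ 2 * ‖z - zstar‖ ^ 2 := by
      rw [hw, hT, hηval, ← hδdef, ← hDdef]
      exact le_of_mul_le_mul_left hsq hsl0
    calc ‖(z - α • g z) - zstar‖ = Real.sqrt (‖(z - α • g z) - zstar‖ ^ 2) :=
          (Real.sqrt_sq (norm_nonneg _)).symm
      _ ≤ Real.sqrt (η ^ 2 * ‖z - zstar‖ ^ 2) := Real.sqrt_le_sqrt hsq2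
      _ = η * ‖z - zstar‖ := by
          rw [← mul_pow, Real.sqrt_sq (mul_nonneg hηnn (norm_nonneg _))]
  · -- large stepsize regime: η = α l - 1
    have hα_sl : α * s ≤ α * l := mul_le_mul_of_nonneg_left hsl hα0.le
    have hαl1 : 1 ≤ α * l := by linarith
    have habs1 : |1 - α * l| = α * l - 1 := by
      rw [abs_of_nonpos (by linarith)]; ring
    have habs2 : |1 - α * s| ≤ α * l - 1 := by
      rw [abs_le]; constructor <;> linarith
    have hmaxle : |1 - α * s| ≤ |1 - α * l| := by rw [habs1]; exact habs2
    have hηval : η = α * l - 1 := by rw [hη, max_eq_left hmaxle, habs1]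
    have hηlt : η < 1 := by rw [hηval]; linarith
    have hηnn : 0 ≤ η := by rw [hηval]; linarith
    refine ⟨?_, hηlt⟩
    have hsq : (s + l) * (D - 2 * α * I + α ^ 2 * Gq) ≤ (s + l) * ((α * l - 1) ^ 2 * D) := by
      nlinarith [mul_nonneg (mul_nonneg hα0.le (by linarith : (0:ℝ) ≤ α * (s + l) - 2))
        (by linarith : (0:ℝ) ≤ l ^ 2 * D - Gq),
        mul_le_mul_of_nonneg_left key hα0.le]
    have hsq2 : ‖(z - α • g z) - zstar‖ ^ 2 ≤ η ^ 2 * ‖z - zstar‖ ^ 2 := by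
      rw [hw, hT, hηval, ← hδdef, ← hDdef]
      exact le_of_mul_le_mul_left hsq hsl0
    calc ‖(z - α • g z) - zstar‖ = Real.sqrt (‖(z - α • g z) - zstar‖ ^ 2) :=
          (Real.sqrt_sq (norm_nonneg _)).symm
      _ ≤ Real.sqrt (η ^ 2 * ‖z - zstar‖ ^ 2) := Real.sqrt_le_sqrt hsq2
      _ = η * ‖z - zstar‖ := by
          rw [← mul_pow, Real.sqrt_sq (mul_nonneg hηnn (norm_nonneg _))]
end

section
/- Let γ ∈ (0,1), b > 0, C₁, C₂ ≥ 0, and let {t_k} be a nonnegative sequence satisfying t_k ≤ (C₁ + C₂k + b·Σ_{r=0}^{k−1} t_r)·γᵏ for all k. Then for every μ ∈ (γ, 1), t_k/μᵏ → 0 as k → ∞; in particular t_k = O(μᵏ) and there exists Φ > 0 with t_k ≤ Φμᵏ for all k. -/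
open Filter

/-- Let `γ ∈ (0,1)`, `b > 0`, `C₁, C₂ ≥ 0`, and `{t_k}` a nonnegative sequence with
`t_k ≤ (C₁ + C₂ k + b Σ_{r<k} t_r) γᵏ` for all `k`. Then for every `μ ∈ (γ, 1)`,
`t_k / μᵏ → 0`; in particular there exists `Φ > 0` with `t_k ≤ Φ μᵏ` for all `k`. -/
theorem linear_rate_of_selfbounded (γ : ℝ) (hγ : γ ∈ Set.Ioo (0 : ℝ) 1)
    (b C₁ C₂ : ℝ) (hb : 0 < b) (hC₁ : 0 ≤ C₁) (hC₂ : 0 ≤ C₂)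
    (t : ℕ → ℝ) (ht : ∀ k, 0 ≤ t k)
    (hrec : ∀ k, t k ≤ (C₁ + C₂ * k + b * ∑ r ∈ Finset.range k, t r) * γ ^ k) :
    ∀ μ : ℝ, μ ∈ Set.Ioo γ 1 →
      Tendsto (fun k => t k / μ ^ k) atTop (nhds 0) ∧
      ∃ Φ : ℝ, 0 < Φ ∧ ∀ k, t k ≤ Φ * μ ^ k := by
  obtain ⟨hγ0, hγ1⟩ := hγ
  have ha_nonneg : ∀ k : ℕ, 0 ≤ (C₁ + C₂ * k) * γ ^ k := fun k =>
    mul_nonneg (by positivity) (by positivity)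
  have hsum : Summable (fun k : ℕ => (C₁ + C₂ * k) * γ ^ k) := by
    have h1 : Summable (fun k : ℕ => C₁ * γ ^ k) :=
      (summable_geometric_of_lt_one hγ0.le hγ1).mul_left _
    have h2 : Summable (fun k : ℕ => C₂ * ((k : ℝ) ^ 1 * γ ^ k)) :=
      ((summable_pow_mul_geometric_of_norm_lt_one (R := ℝ) 1
        (by rw [Real.norm_eq_abs, abs_of_pos hγ0]; exact hγ1)).mul_left _)
    refine (h1.add h2).congr fun k => ?_
    simp; ring
  set T : ℝ := ∑' k : ℕ, (C₁ + C₂ * k) * γ ^ k with hT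
  have hT0 : 0 ≤ T := tsum_nonneg ha_nonneg
  have hSle : ∀ k, ∑ r ∈ Finset.range k, (C₁ + C₂ * r) * γ ^ r ≤ T := fun k =>
    Summable.sum_le_tsum _ (fun r _ => ha_nonneg r) hsum
  have hP1 : ∀ k : ℕ, (1:ℝ) ≤ ∏ r ∈ Finset.range k, (1 + b * γ ^ r) := by
    intro k
    calc (1:ℝ) = ∏ _r ∈ Finset.range k, (1:ℝ) := by simp
      _ ≤ ∏ r ∈ Finset.range k, (1 + b * γ ^ r) :=
        Finset.prod_le_prod (fun r _ => zero_le_one)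
          (fun r _ => by nlinarith [pow_pos hγ0 r])
  set E : ℝ := Real.exp (b / (1 - γ)) with hE
  have hPE : ∀ k : ℕ, ∏ r ∈ Finset.range k, (1 + b * γ ^ r) ≤ E := by
    intro k
    have h1 : ∏ r ∈ Finset.range k, (1 + b * γ ^ r)
        ≤ Real.exp (∑ r ∈ Finset.range k, b * γ ^ r) := by
      rw [Real.exp_sum]
      exact Finset.prod_le_prod (fun r _ => by nlinarith [pow_pos hγ0 r])
        (fun r _ => by linarith [Real.add_one_le_exp (b * γ ^ r)])
    refine h1.trans (Real.exp_le_exp.2 ?_)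
    rw [← Finset.mul_sum, div_eq_mul_inv]
    refine mul_le_mul_of_nonneg_left ?_ hb.le
    have hgs : Summable (fun r : ℕ => γ ^ r) := summable_geometric_of_lt_one hγ0.le hγ1
    have := Summable.sum_le_tsum (Finset.range k) (fun r _ => by positivity) hgs
    rwa [tsum_geometric_of_lt_one hγ0.le hγ1] at this
  -- key inductive bound on partial sums
  have hv : ∀ k, ∑ r ∈ Finset.range k, t r ≤
      (∑ r ∈ Finset.range k, (C₁ + C₂ * r) * γ ^ r) *
        ∏ r ∈ Finset.range k, (1 + b * γ ^ r) := by
    intro k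
    induction k with
    | zero => simp
    | succ k ih =>
      have hγk : (0:ℝ) < γ ^ k := pow_pos hγ0 k
      have htk : t k ≤ b * γ ^ k * (∑ r ∈ Finset.range k, t r)
          + (C₁ + C₂ * k) * γ ^ k := by
        have := hrec k
        nlinarith
      have hSnn : 0 ≤ ∑ r ∈ Finset.range k, (C₁ + C₂ * r) * γ ^ r :=
        Finset.sum_nonneg fun r _ => ha_nonneg r
      have hvk : 0 ≤ ∑ r ∈ Finset.range k, t r :=
        Finset.sum_nonneg fun r _ => ht r
      rw [Finset.sum_range_succ, Finset.sum_range_succ, Finset.prod_range_succ]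
      have h1 : (1 + b * γ ^ k) * (∑ r ∈ Finset.range k, t r) ≤
          (1 + b * γ ^ k) * ((∑ r ∈ Finset.range k, (C₁ + C₂ * r) * γ ^ r) *
            ∏ r ∈ Finset.range k, (1 + b * γ ^ r)) :=
        mul_le_mul_of_nonneg_left ih (by nlinarith)
      have hX : (1:ℝ) ≤ (∏ r ∈ Finset.range k, (1 + b * γ ^ r)) * (1 + b * γ ^ k) := by
        nlinarith [hP1 k, mul_pos hb (pow_pos hγ0 k)]
      have h2 : (C₁ + C₂ * k) * γ ^ k ≤ (C₁ + C₂ * k) * γ ^ k *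
          ((∏ r ∈ Finset.range k, (1 + b * γ ^ r)) * (1 + b * γ ^ k)) :=
        le_mul_of_one_le_right (ha_nonneg k) hX
      nlinarith [h1, h2, htk]
  set M : ℝ := T * E with hM
  have hM0 : 0 ≤ M := mul_nonneg hT0 (Real.exp_pos _).le
  have hvM : ∀ k, ∑ r ∈ Finset.range k, t r ≤ M := by
    intro k
    refine (hv k).trans ?_
    have hSnn : 0 ≤ ∑ r ∈ Finset.range k, (C₁ + C₂ * r) * γ ^ r :=
      Finset.sum_nonneg fun r _ => ha_nonneg r
    have hPnn : (0:ℝ) ≤ ∏ r ∈ Finset.range k, (1 + b * γ ^ r) :=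
      zero_le_one.trans (hP1 k)
    calc (∑ r ∈ Finset.range k, (C₁ + C₂ * r) * γ ^ r) *
          ∏ r ∈ Finset.range k, (1 + b * γ ^ r)
        ≤ T * ∏ r ∈ Finset.range k, (1 + b * γ ^ r) :=
          mul_le_mul_of_nonneg_right (hSle k) hPnn
      _ ≤ T * E := mul_le_mul_of_nonneg_left (hPE k) hT0
  have htb : ∀ k, t k ≤ (C₁ + b * M + C₂ * k) * γ ^ k := by
    intro k
    refine (hrec k).trans ?_
    refine mul_le_mul_of_nonneg_right ?_ (by positivity)
    nlinarith [hvM k]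
  intro μ ⟨hμγ, hμ1⟩
  have hμ0 : 0 < μ := hγ0.trans hμγ
  have hr0 : 0 ≤ γ / μ := div_nonneg hγ0.le hμ0.le
  have hr1 : γ / μ < 1 := (div_lt_one hμ0).2 hμγ
  set u : ℕ → ℝ := fun k => (C₁ + b * M + C₂ * k) * (γ / μ) ^ k with hu
  have hulim : Tendsto u atTop (nhds 0) := by
    have h1 : Tendsto (fun k : ℕ => (C₁ + b * M) * (γ / μ) ^ k) atTop (nhds 0) := by
      simpa using (tendsto_pow_atTop_nhds_zero_of_lt_one hr0 hr1).const_mul (C₁ + b * M)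
    have h2 : Tendsto (fun k : ℕ => C₂ * ((k : ℝ) ^ 1 * (γ / μ) ^ k)) atTop (nhds 0) := by
      simpa using (tendsto_pow_const_mul_const_pow_of_lt_one 1 hr0 hr1).const_mul C₂
    have h3 := h1.add h2
    rw [add_zero] at h3
    refine h3.congr fun k => ?_
    simp [hu]; ring
  have hdiv : ∀ k, t k / μ ^ k ≤ u k := by
    intro k
    rw [div_le_iff₀ (by positivity)]
    calc t k ≤ (C₁ + b * M + C₂ * k) * γ ^ k := htb k
      _ = u k * μ ^ k := by
          rw [hu]; simp only [div_pow]
          field_simp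
  have hdiv0 : ∀ k, 0 ≤ t k / μ ^ k := fun k => div_nonneg (ht k) (by positivity)
  have hlim : Tendsto (fun k => t k / μ ^ k) atTop (nhds 0) :=
    squeeze_zero hdiv0 hdiv hulim
  refine ⟨hlim, ?_⟩
  obtain ⟨Φ₀, hΦ₀⟩ := hulim.bddAbove_range
  refine ⟨max Φ₀ 1, lt_max_of_lt_right one_pos, fun k => ?_⟩
  have hΦk : u k ≤ max Φ₀ 1 := le_max_of_le_left (hΦ₀ ⟨k, rfl⟩)
  have h := (hdiv k).trans hΦk
  rw [div_le_iff₀ (by positivity)] at h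
  exact h
end

section
/- Let G(α) be the 3×3 matrix [[σ, 0, α], [αK₁, 1 − αK₂, 0], [K₃ + αK₄, αK₅, σ + αK₆]] with σ ∈ (0,1) and K₁,…,K₆ > 0. Then ρ(G(0)) = 1, with eigenvalues σ, σ, 1, and the derivative of the eigenvalue q(α) passing through q(0) = 1 satisfies dq/dα|_{α=0} = −K₂ < 0; hence ρ(G(α)) < 1 for all sufficiently small α > 0. -/
set_option maxHeartbeats 4000000

open Polynomial Filter

/-- The matrix `G(α)` of the ADD-OPT analysis. -/
noncomputable def Gmat (σ K₁ K₂ K₃ K₄ K₅ K₆ : ℝ) (α : ℝ) : Matrix (Fin 3) (Fin 3) ℝ :=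
  !![σ, 0, α;
     α * K₁, 1 - α * K₂, 0;
     K₃ + α * K₄, α * K₅, σ + α * K₆]

lemma charpoly_eval_eq {n : Type*} [Fintype n] [DecidableEq n] {R : Type*} [CommRing R]
    (A : Matrix n n R) (μ : R) :
    (A.charpoly).eval μ = (Matrix.scalar n μ - A).det := by
  rw [Matrix.charpoly, eval_det, Matrix.matPolyEquiv_charmatrix]
  simp

lemma eig_iff {n : Type*} [Fintype n] [DecidableEq n] (A : Matrix n n ℂ) (μ : ℂ) :
    Module.End.HasEigenvalue (Matrix.toLin' A) μ ↔ (A.charpoly).eval μ = 0 := by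
  rw [charpoly_eval_eq]
  rw [← Matrix.exists_mulVec_eq_zero_iff]
  constructor
  · intro h
    obtain ⟨v, hv⟩ := h.exists_hasEigenvector
    refine ⟨v, hv.2, ?_⟩
    have := Module.End.mem_eigenspace_iff.mp hv.1
    rw [Matrix.toLin'_apply] at this
    rw [Matrix.sub_mulVec, this]
    simp [Matrix.smul_mulVec]
  · rintro ⟨v, hv0, hv⟩
    apply Module.End.hasEigenvalue_of_hasEigenvector (x := v)
    refine ⟨Module.End.mem_eigenspace_iff.mpr ?_, hv0⟩
    rw [Matrix.toLin'_apply]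
    rw [Matrix.sub_mulVec] at hv
    have : (Matrix.scalar n μ).mulVec v = μ • v := by
      funext i
      simp [Matrix.scalar, Matrix.mulVec_diagonal]
    rw [this] at hv
    rw [sub_eq_zero] at hv
    exact hv.symm

/-- Explicit characteristic polynomial value, real version. -/
lemma Gval (σ K₁ K₂ K₃ K₄ K₅ K₆ α x : ℝ) :
    ((Gmat σ K₁ K₂ K₃ K₄ K₅ K₆ α).charpoly).eval x =
      (x - σ) * (x - (1 - α * K₂)) * (x - (σ + α * K₆))
        - α ^ 3 * (K₁ * K₅) - α * (x - (1 - α * K₂)) * (K₃ + α * K₄) := by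
  rw [charpoly_eval_eq, Matrix.det_fin_three]
  simp [Gmat, Matrix.scalar]
  ring

/-- Explicit characteristic polynomial value, complex version. -/
lemma GvalC (σ K₁ K₂ K₃ K₄ K₅ K₆ α : ℝ) (μ : ℂ) :
    (((Gmat σ K₁ K₂ K₃ K₄ K₅ K₆ α).map Complex.ofReal).charpoly).eval μ =
      (μ - σ) * (μ - (1 - (α:ℂ) * K₂)) * (μ - (σ + (α:ℂ) * K₆))
        - (α:ℂ) ^ 3 * (K₁ * K₅) - α * (μ - (1 - (α:ℂ) * K₂)) * (K₃ + (α:ℂ) * K₄) := by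
  rw [charpoly_eval_eq, Matrix.det_fin_three]
  simp [Gmat, Matrix.scalar]
  ring

lemma Gchar0 (σ K₁ K₂ K₃ K₄ K₅ K₆ : ℝ) :
    (Gmat σ K₁ K₂ K₃ K₄ K₅ K₆ 0).charpoly = (X - C σ) ^ 2 * (X - C 1) := by
  rw [Matrix.charpoly, Matrix.det_fin_three]
  simp [Gmat, Matrix.charmatrix_apply_eq, Matrix.charmatrix_apply_ne]
  ring

private lemma ev_lt {g : ℝ → ℝ} (hg : Continuous g) {b : ℝ} (hb : g 0 < b) :
    ∀ᶠ α in nhds (0:ℝ), g α < b :=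
  hg.continuousAt.eventually_lt continuousAt_const hb


/-- `G(0)` has eigenvalues `σ, σ, 1`, so `ρ(G(0)) = 1`; the eigenvalue branch `q(α)`
through `q(0) = 1` has derivative `dq/dα|₀ = -K₂ < 0`; hence `ρ(G(α)) < 1` for all
sufficiently small `α > 0`. -/
theorem spectral_radius_G_lt_one_small_step
    (σ K₁ K₂ K₃ K₄ K₅ K₆ : ℝ) (hσ : σ ∈ Set.Ioo (0 : ℝ) 1)
    (hK₁ : 0 < K₁) (hK₂ : 0 < K₂) (hK₃ : 0 < K₃) (hK₄ : 0 < K₄)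
    (hK₅ : 0 < K₅) (hK₆ : 0 < K₆) :
    (Gmat σ K₁ K₂ K₃ K₄ K₅ K₆ 0).charpoly = (X - C σ) ^ 2 * (X - C 1) ∧
    (∀ μ : ℂ, Module.End.HasEigenvalue
        (Matrix.toLin' ((Gmat σ K₁ K₂ K₃ K₄ K₅ K₆ 0).map Complex.ofReal)) μ → ‖μ‖ ≤ 1) ∧
    Module.End.HasEigenvalue
        (Matrix.toLin' ((Gmat σ K₁ K₂ K₃ K₄ K₅ K₆ 0).map Complex.ofReal)) 1 ∧
    (∃ q : ℝ → ℝ, q 0 = 1 ∧ HasDerivAt q (-K₂) 0 ∧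
      ∀ᶠ α in nhds (0 : ℝ), ((Gmat σ K₁ K₂ K₃ K₄ K₅ K₆ α).charpoly).eval (q α) = 0) ∧
    (∃ ᾱ : ℝ, 0 < ᾱ ∧ ∀ α : ℝ, 0 < α → α < ᾱ →
      ∀ μ : ℂ, Module.End.HasEigenvalue
        (Matrix.toLin' ((Gmat σ K₁ K₂ K₃ K₄ K₅ K₆ α).map Complex.ofReal)) μ → ‖μ‖ < 1) := by
  have hσ0 := hσ.1
  have hσ1 := hσ.2
  refine ⟨Gchar0 σ K₁ K₂ K₃ K₄ K₅ K₆, ?_, ?_, ?_, ?_⟩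
  · intro μ hμ
    rw [eig_iff, GvalC] at hμ
    have h1 : (μ - σ) ^ 2 * (μ - 1) = 0 := by
      push_cast at hμ
      linear_combination hμ
    rcases mul_eq_zero.mp h1 with h | h
    · have : μ = (σ:ℂ) := by
        have := pow_eq_zero_iff (n := 2) (by norm_num) |>.mp h
        linear_combination this
      rw [this]
      simp [abs_of_pos hσ0]
      linarith
    · have : μ = 1 := by linear_combination h
      simp [this]
  · rw [eig_iff, GvalC]
    push_cast
    ring
  ·
    set c : ℝ := 1 - σ with hc
    have hcpos : 0 < c := by simp [hc]; linarith
    set D : ℝ := 8 * K₁ * K₅ / c ^ 2 with hD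
    have hDpos : 0 < D := by positivity
    have hc2 : (0:ℝ) < c ^ 2 := by positivity
    have hDval : D * c ^ 2 = 8 * K₁ * K₅ := by rw [hD]; field_simp
    clear_value c D
    -- small ε with uniform bounds
    have hev : ∀ᶠ α in nhds (0:ℝ),
        (|α| * K₂ + D * |α| ^ 3 < c / 4 ∧ |α| * K₆ < c / 4) ∧
          (|α| * (K₃ + K₄) < c ^ 2 / 8 ∧ |α| < 1) := by
      refine ((ev_lt (by continuity) ?_).and (ev_lt (by continuity) ?_)).and
        ((ev_lt (by continuity) ?_).and (ev_lt (by continuity) ?_)) <;> norm_num <;> positivity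
    obtain ⟨ε, hεpos, hε⟩ := Metric.eventually_nhds_iff.mp hev
    simp only [Real.dist_eq, sub_zero] at hε
    have key : ∀ α : ℝ, |α| < ε → ∃ x : ℝ, |x - (1 - α * K₂)| ≤ D * |α| ^ 3 ∧
        (x - σ) * (x - (1 - α * K₂)) * (x - (σ + α * K₆))
          - α ^ 3 * (K₁ * K₅) - α * (x - (1 - α * K₂)) * (K₃ + α * K₄) = 0 := by
      intro α hα
      obtain ⟨⟨c1, c2⟩, c3, c4⟩ := hε hα
      set m : ℝ := 1 - α * K₂ with hm
      set δ : ℝ := D * |α| ^ 3 with hδ'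
      have hδ : 0 ≤ δ := by positivity
      clear_value m δ
      have ha1 := le_abs_self α
      have ha2 := neg_abs_le α
      have ha0 := abs_nonneg α
      have hsq : α ^ 2 = |α| ^ 2 := (sq_abs α).symm
      have hcube : α ^ 3 ≤ |α| ^ 3 := by
        calc α ^ 3 ≤ |α ^ 3| := le_abs_self _
        _ = |α| ^ 3 := by rw [abs_pow]
      have hcube' : -(|α| ^ 3) ≤ α ^ 3 := by
        have := neg_abs_le (α ^ 3)
        rwa [abs_pow] at this
      have hQ : ∀ x : ℝ, m - δ ≤ x → x ≤ m + δ →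
          c ^ 2 / 4 ≤ (x - σ) * (x - (σ + α * K₆)) - α * (K₃ + α * K₄) := by
        intro x h1 h2
        have h3 : 3 * c / 4 ≤ x - σ := by
          have : α * K₂ ≤ |α| * K₂ := by nlinarith
          simp only [hc]; nlinarith
        have h4 : c / 2 ≤ x - (σ + α * K₆) := by
          have : α * K₆ ≤ |α| * K₆ := by nlinarith
          simp only [hc]; nlinarith
        have h5 : α * (K₃ + α * K₄) ≤ c ^ 2 / 8 := by
          have f1 : α * K₃ ≤ |α| * K₃ := by nlinarith
          have f2 : |α| ^ 2 ≤ |α| := by nlinarith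
          nlinarith [hsq]
        have hprod : 3 * c / 4 * (c / 2) ≤ (x - σ) * (x - (σ + α * K₆)) :=
          mul_le_mul h3 h4 (by linarith) (by linarith)
        nlinarith
      have hQhi := hQ (m + δ) (by linarith) (by linarith)
      have hQlo := hQ (m - δ) (by linarith) (by linarith)
      have hδQ : 2 * (K₁ * K₅) * |α| ^ 3 ≤ δ * (c ^ 2 / 4) := by
        have hc2 : (c:ℝ) ^ 2 ≠ 0 := by positivity
        have heq : δ * (c ^ 2 / 4) = 2 * (K₁ * K₅) * |α| ^ 3 := by
          rw [hδ']
          have : D * (c ^ 2 / 4) = 2 * (K₁ * K₅) := by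
            have := hDval
            field_simp
            linarith
          nlinarith [this]
        linarith [heq.ge]
      have Phi : 0 ≤ (m + δ - σ) * (m + δ - m) * (m + δ - (σ + α * K₆))
          - α ^ 3 * (K₁ * K₅) - α * (m + δ - m) * (K₃ + α * K₄) := by
        have : (m + δ - σ) * (m + δ - m) * (m + δ - (σ + α * K₆))
            - α ^ 3 * (K₁ * K₅) - α * (m + δ - m) * (K₃ + α * K₄)
            = δ * ((m + δ - σ) * (m + δ - (σ + α * K₆)) - α * (K₃ + α * K₄))
              - α ^ 3 * (K₁ * K₅) := by ring
        rw [this]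
        have := mul_le_mul_of_nonneg_left hQhi hδ
        have hcK : α ^ 3 * (K₁ * K₅) ≤ |α| ^ 3 * (K₁ * K₅) :=
          mul_le_mul_of_nonneg_right hcube (by positivity)
        have h0 : 0 ≤ |α| ^ 3 * (K₁ * K₅) := by positivity
        linarith
      have Plo : (m - δ - σ) * (m - δ - m) * (m - δ - (σ + α * K₆))
          - α ^ 3 * (K₁ * K₅) - α * (m - δ - m) * (K₃ + α * K₄) ≤ 0 := by
        have : (m - δ - σ) * (m - δ - m) * (m - δ - (σ + α * K₆))
            - α ^ 3 * (K₁ * K₅) - α * (m - δ - m) * (K₃ + α * K₄)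
            = -(δ * ((m - δ - σ) * (m - δ - (σ + α * K₆)) - α * (K₃ + α * K₄)))
              - α ^ 3 * (K₁ * K₅) := by ring
        rw [this]
        have := mul_le_mul_of_nonneg_left hQlo hδ
        have hcK : -(|α| ^ 3 * (K₁ * K₅)) ≤ α ^ 3 * (K₁ * K₅) := by
          have := mul_le_mul_of_nonneg_right hcube' (by positivity : (0:ℝ) ≤ K₁ * K₅)
          linarith
        have h0 : 0 ≤ |α| ^ 3 * (K₁ * K₅) := by positivity
        linarith
      have hcont : ContinuousOn (fun x : ℝ => (x - σ) * (x - m) * (x - (σ + α * K₆))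
          - α ^ 3 * (K₁ * K₅) - α * (x - m) * (K₃ + α * K₄)) (Set.Icc (m - δ) (m + δ)) := by
        fun_prop
      have hmem : (0:ℝ) ∈ Set.Icc
          ((fun x : ℝ => (x - σ) * (x - m) * (x - (σ + α * K₆))
            - α ^ 3 * (K₁ * K₅) - α * (x - m) * (K₃ + α * K₄)) (m - δ))
          ((fun x : ℝ => (x - σ) * (x - m) * (x - (σ + α * K₆))
            - α ^ 3 * (K₁ * K₅) - α * (x - m) * (K₃ + α * K₄)) (m + δ)) := by
        exact ⟨by simpa using Plo, by simpa using Phi⟩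
      have := intermediate_value_Icc (by linarith : m - δ ≤ m + δ) hcont
      obtain ⟨x, hx, hfx⟩ := this hmem
      exact ⟨x, abs_le.mpr ⟨by linarith [hx.1], by linarith [hx.2]⟩, hfx⟩
    set q : ℝ → ℝ := fun α => if h : |α| < ε then (key α h).choose else 1 with hqdef
    have hqspec : ∀ (α : ℝ) (h : |α| < ε), |q α - (1 - α * K₂)| ≤ D * |α| ^ 3 ∧
        (q α - σ) * (q α - (1 - α * K₂)) * (q α - (σ + α * K₆))
          - α ^ 3 * (K₁ * K₅) - α * (q α - (1 - α * K₂)) * (K₃ + α * K₄) = 0 := by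
      intro α h
      simp only [hqdef, dif_pos h]
      exact (key α h).choose_spec
    have h0ε : |(0:ℝ)| < ε := by simpa using hεpos
    have hq0 : q 0 = 1 := by
      have h1 := (hqspec 0 h0ε).1
      norm_num at h1
      linarith
    have hball : ∀ᶠ α in nhds (0:ℝ), |α| < ε := by
      filter_upwards [Metric.ball_mem_nhds (0:ℝ) hεpos] with a ha
      simpa [Real.dist_eq] using ha
    refine ⟨q, hq0, ?_, ?_⟩
    · rw [hasDerivAt_iff_isLittleO, Asymptotics.isLittleO_iff]
      intro c0 hc0
      have hev2 : ∀ᶠ α in nhds (0:ℝ), D * α ^ 2 < c0 := by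
        refine ev_lt (by continuity) (by simpa using hc0)
      filter_upwards [hball, hev2] with α h1 h2
      have spec := (hqspec α h1).1
      have e : q α - q 0 - (α - 0) • (-K₂) = q α - (1 - α * K₂) := by
        rw [hq0]; simp; ring
      rw [e, Real.norm_eq_abs, Real.norm_eq_abs, sub_zero]
      calc |q α - (1 - α * K₂)| ≤ D * |α| ^ 3 := spec
        _ = D * α ^ 2 * |α| := by rw [← sq_abs]; ring
        _ ≤ c0 * |α| := by nlinarith [abs_nonneg α]
    · filter_upwards [hball] with α hα
      rw [Gval]
      exact (hqspec α hα).2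
  · set c : ℝ := 1 - σ with hc
    have hcpos : 0 < c := by simp [hc]; linarith
    have hc2 : (0:ℝ) < c ^ 2 := by positivity
    clear_value c
    have hev : ∀ᶠ α in nhds (0:ℝ),
        (|α| * K₆ < c / 2 ∧ |α| * (K₃ + K₄) < c ^ 2 / 4) ∧
          (|α| * K₂ < 1 ∧ (4 * K₁ * K₅ / c ^ 2) * α ^ 2 < K₂ / 2) ∧ |α| < 1 := by
      refine ((ev_lt (by continuity) ?_).and (ev_lt (by continuity) ?_)).and
        (((ev_lt (by continuity) ?_).and (ev_lt (by continuity) ?_)).and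
          (ev_lt (by continuity) ?_)) <;> norm_num <;> positivity
    obtain ⟨ε, hεpos, hε⟩ := Metric.eventually_nhds_iff.mp hev
    simp only [Real.dist_eq, sub_zero] at hε
    refine ⟨ε, hεpos, ?_⟩
    intro α hα0 hαε μ hμ
    rw [eig_iff, GvalC] at hμ
    obtain ⟨⟨c1, c2⟩, ⟨c3, c4⟩, c5⟩ := hε (by rw [abs_of_pos hα0]; exact hαε)
    rw [abs_of_pos hα0] at c1 c2 c3 c5
    by_contra hge
    push_neg at hge
    have heq : (μ - (1 - (α:ℂ) * K₂)) *
        ((μ - σ) * (μ - (σ + (α:ℂ) * K₆)) - (α:ℂ) * (K₃ + (α:ℂ) * K₄))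
        = (α:ℂ) ^ 3 * (K₁ * K₅) := by linear_combination hμ
    have n1 : c ≤ ‖μ - (σ:ℂ)‖ := by
      have h := norm_sub_norm_le μ ((σ:ℂ))
      rw [Complex.norm_real, Real.norm_eq_abs, abs_of_pos hσ0] at h
      simp only [hc]
      linarith
    have n2 : c / 2 ≤ ‖μ - ((σ:ℂ) + (α:ℂ) * K₆)‖ := by
      have e : ((σ:ℂ) + (α:ℂ) * K₆) = ((σ + α * K₆ : ℝ) : ℂ) := by push_cast; ring
      rw [e]
      have h := norm_sub_norm_le μ (((σ + α * K₆ : ℝ)):ℂ)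
      rw [Complex.norm_real, Real.norm_eq_abs, abs_of_pos (by positivity)] at h
      simp only [hc] at *
      linarith
    have n3 : ‖(α:ℂ) * ((K₃:ℂ) + (α:ℂ) * K₄)‖ ≤ c ^ 2 / 4 := by
      rw [show (α:ℂ) * ((K₃:ℂ) + (α:ℂ) * K₄) = ((α * (K₃ + α * K₄) : ℝ) : ℂ) by push_cast; ring,
        Complex.norm_real, Real.norm_eq_abs, abs_of_pos (by positivity)]
      have hα2 : α ^ 2 ≤ α := by nlinarith
      nlinarith [hα2, mul_le_mul_of_nonneg_left hα2 hK₄.le]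
    have n4 : c ^ 2 / 4 ≤ ‖(μ - σ) * (μ - ((σ:ℂ) + (α:ℂ) * K₆)) - (α:ℂ) * ((K₃:ℂ) + (α:ℂ) * K₄)‖ := by
      have h := norm_sub_norm_le ((μ - σ) * (μ - ((σ:ℂ) + (α:ℂ) * K₆))) ((α:ℂ) * ((K₃:ℂ) + (α:ℂ) * K₄))
      rw [norm_mul] at h
      have h2 : c * (c / 2) ≤ ‖μ - (σ:ℂ)‖ * ‖μ - ((σ:ℂ) + (α:ℂ) * K₆)‖ :=
        mul_le_mul n1 n2 (by linarith) (norm_nonneg _)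
      nlinarith
    have n5 : ‖μ - (1 - (α:ℂ) * K₂)‖ *
        ‖(μ - σ) * (μ - ((σ:ℂ) + (α:ℂ) * K₆)) - (α:ℂ) * ((K₃:ℂ) + (α:ℂ) * K₄)‖
        = α ^ 3 * (K₁ * K₅) := by
      rw [← norm_mul, heq,
        show ((α:ℂ) ^ 3 * ((K₁:ℂ) * K₅)) = ((α ^ 3 * (K₁ * K₅) : ℝ) : ℂ) by push_cast; ring,
        Complex.norm_real, Real.norm_eq_abs, abs_of_pos (by positivity)]
    have n6 : ‖μ - (1 - (α:ℂ) * K₂)‖ * (c ^ 2 / 4) ≤ α ^ 3 * (K₁ * K₅) := by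
      rw [← n5]
      exact mul_le_mul_of_nonneg_left n4 (norm_nonneg _)
    have n7 : ‖μ‖ ≤ (1 - α * K₂) + ‖μ - (1 - (α:ℂ) * K₂)‖ := by
      have e : μ = (1 - (α:ℂ) * K₂) + (μ - (1 - (α:ℂ) * K₂)) := by ring
      calc ‖μ‖ = ‖(1 - (α:ℂ) * K₂) + (μ - (1 - (α:ℂ) * K₂))‖ := by rw [← e]
        _ ≤ ‖(1 - (α:ℂ) * K₂)‖ + ‖μ - (1 - (α:ℂ) * K₂)‖ := norm_add_le _ _
        _ = (1 - α * K₂) + ‖μ - (1 - (α:ℂ) * K₂)‖ := by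
            rw [show (1 - (α:ℂ) * K₂) = ((1 - α * K₂ : ℝ) : ℂ) by push_cast; ring,
              Complex.norm_real, Real.norm_eq_abs, abs_of_pos (by nlinarith [abs_nonneg α])]
    -- final contradiction
    have hw : ‖μ - (1 - (α:ℂ) * K₂)‖ ≤ 4 * K₁ * K₅ / c ^ 2 * α ^ 3 := by
      rw [← sub_nonneg]
      have e : 4 * K₁ * K₅ / c ^ 2 * α ^ 3 - ‖μ - (1 - (α:ℂ) * K₂)‖
          = (α ^ 3 * (K₁ * K₅) - ‖μ - (1 - (α:ℂ) * K₂)‖ * (c ^ 2 / 4)) * (4 / c ^ 2) := by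
        field_simp
      rw [e]
      exact mul_nonneg (by linarith) (by positivity)
    have hlast : 4 * K₁ * K₅ / c ^ 2 * α ^ 3 < K₂ / 2 * α := by
      have := mul_lt_mul_of_pos_right c4 hα0
      calc 4 * K₁ * K₅ / c ^ 2 * α ^ 3 = (4 * K₁ * K₅ / c ^ 2 * α ^ 2) * α := by ring
        _ < K₂ / 2 * α := this
    nlinarith
end
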